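/- arXiv:1203.0967 — 3 statements merged into one kernel-verified Lean document; each statement's English description precedes it below -/
import Mathlib

section
/- Sphere-packing lower bound: for each large m, there exists a set Y ⊆ S^{m-1} of vectors z with coordinates z_i ∈ {−1/√m₀, 0, 1/√m₀} where m₀ = ⌊2m/9⌋, each having exactly m₀ nonzero coordinates, such that ‖z − z'‖ ≥ 1 for distinct z, z' ∈ Y, and |Y| ≥ (9/8)^{m(1+o(1))}. -/
/-!
Zong's construction. Scale the ternary words `f ∈ {-1, 0, 1}^m` of weight `t = ⌊2m/9⌋` by `1/√t`
onto the unit sphere: two of them are at distance `> 1` as soon as `⟪f, g⟫ < t/2`. A maximal family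
of words with no such close pair has at least `|V| / B` members, where `|V| = C(m,t) 2^t` and `B`
bounds the number of words close to a fixed one. None of the `m + 1` terms of `9^m = (2 + 7)^m`
exceeds twice `|V| 7^(m-t)` (the mode sits at `t` or `t + 1`), while an exponential-moment
(Chernoff) bound gives `B ≤ (481/64)^t (8/7)^(m-t)`. Together `|V| / B ≥ (9/8)^m (512/481)^t / (2(m+1))`, and the last
factor exceeds `1` for large `m`.
-/

open Finset Filter

variable {α : Type*} {R : α → α → Prop}

theorem Finset.exists_pairwise_not_rel_covering (hR : ∀ a b, R a b → R b a) (V : Finset α)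
    (hrefl : ∀ v ∈ V, R v v) :
    ∃ S ⊆ V, (S : Set α).Pairwise (fun a b => ¬ R a b) ∧ ∀ v ∈ V, ∃ s ∈ S, R s v := by
  classical
  obtain ⟨S, hS, hmax⟩ :=
    (V.powerset.filter fun S : Finset α => (S : Set α).Pairwise (fun a b => ¬ R a b))
      |>.exists_max_image card ⟨∅, by simp⟩
  simp only [mem_filter, mem_powerset] at hS hmax
  refine ⟨S, hS.1, hS.2, fun v hv => ?_⟩
  by_contra! hfar
  have hvS : v ∉ S := fun h => hfar v h (hrefl v hv)
  have hindep : ((insert v S : Finset α) : Set α).Pairwise (fun a b => ¬ R a b) := by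
    rw [coe_insert]
    exact hS.2.insert fun s hs _ => ⟨fun h => hfar s hs (hR _ _ h), hfar s hs⟩
  have := hmax _ ⟨insert_subset hv hS.1, hindep⟩
  rw [card_insert_of_notMem hvS] at this
  omega

theorem Finset.exists_pairwise_not_rel_card_le [DecidableRel R] (hR : ∀ a b, R a b → R b a)
    (V : Finset α) (hrefl : ∀ v ∈ V, R v v) {B : ℝ} (hB : ∀ v ∈ V, (#{w ∈ V | R v w} : ℝ) ≤ B) :
    ∃ S ⊆ V, (S : Set α).Pairwise (fun a b => ¬ R a b) ∧ (#V : ℝ) ≤ #S * B := by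
  classical
  obtain ⟨S, hSV, hS, hcover⟩ := V.exists_pairwise_not_rel_covering hR hrefl
  refine ⟨S, hSV, hS, ?_⟩
  calc (#V : ℝ) ≤ #(S.biUnion fun s => {w ∈ V | R s w}) := by
        gcongr
        intro v hv
        obtain ⟨s, hs, hsv⟩ := hcover v hv
        exact mem_biUnion.2 ⟨s, hs, mem_filter.2 ⟨hv, hsv⟩⟩
    _ ≤ ∑ s ∈ S, (#{w ∈ V | R s w} : ℝ) := by exact_mod_cast card_biUnion_le
    _ ≤ #S * B := by
        simpa using sum_le_sum fun s hs => hB s (hSV hs)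

def constantWeightTernary (m t : ℕ) : Finset (Fin m → ℤ) :=
  {f ∈ Fintype.piFinset fun _ => ({-1, 0, 1} : Finset ℤ) | #{i | f i ≠ 0} = t}

theorem mem_constantWeightTernary {m t : ℕ} {f : Fin m → ℤ} :
    f ∈ constantWeightTernary m t ↔
    (∀ i, f i = -1 ∨ f i = 0 ∨ f i = 1) ∧ #{i | f i ≠ 0} = t := by
  simp [constantWeightTernary, Fintype.mem_piFinset]

namespace constantWeightTernary

variable {m t : ℕ} {f g : Fin m → ℤ}

theorem natAbs_apply_eq_ite (hf : f ∈ constantWeightTernary m t) (i : Fin m) :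
    (f i).natAbs = if f i = 0 then 0 else 1 := by
  rcases (mem_constantWeightTernary.1 hf).1 i with h | h | h <;> simp [h]

theorem sum_natAbs (hf : f ∈ constantWeightTernary m t) : ∑ i, (f i).natAbs = t := by
  simp only [natAbs_apply_eq_ite hf, sum_ite, sum_const_zero, sum_const, smul_eq_mul, mul_one,
    zero_add]
  exact (mem_constantWeightTernary.1 hf).2

theorem dotProduct_self (hf : f ∈ constantWeightTernary m t) : f ⬝ᵥ f = t := by
  have : ∀ i, f i * f i = (f i).natAbs := fun i => by
    rw [natAbs_apply_eq_ite hf]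
    rcases (mem_constantWeightTernary.1 hf).1 i with h | h | h <;> simp [h]
  simp only [dotProduct, this, ← Nat.cast_sum, sum_natAbs hf]

theorem filter_support_eq_piFinset {s : Finset (Fin m)} (hs : #s = t) :
    {f ∈ constantWeightTernary m t | ({i | f i ≠ 0} : Finset (Fin m)) = s} =
      Fintype.piFinset fun i => if i ∈ s then ({-1, 1} : Finset ℤ) else {0} := by
  ext f
  simp only [mem_filter, mem_constantWeightTernary, Fintype.mem_piFinset]
  constructor
  · rintro ⟨⟨hval, -⟩, rfl⟩ i
    rcases hval i with h | h | h <;> simp [h]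
  · intro hf
    have hsupp : ({i | f i ≠ 0} : Finset (Fin m)) = s := by
      ext i
      have := hf i
      by_cases hi : i ∈ s <;> simp only [hi, if_true, if_false] at this <;> simp at this <;>
        simp [hi] <;> omega
    refine ⟨⟨fun i => ?_, hsupp ▸ hs⟩, hsupp⟩
    have := hf i
    split_ifs at this <;> simp at this <;> omega

theorem card_eq : #(constantWeightTernary m t) = m.choose t * 2 ^ t := by
  have hmaps : ∀ f ∈ constantWeightTernary m t,
      ({i | f i ≠ 0} : Finset (Fin m)) ∈ powersetCard t univ :=
    fun f hf => mem_powersetCard.2 ⟨subset_univ _, (mem_constantWeightTernary.1 hf).2⟩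
  rw [card_eq_sum_card_fiberwise hmaps]
  calc _ = ∑ s ∈ powersetCard t (univ : Finset (Fin m)), 2 ^ t := sum_congr rfl fun s hs => ?_
    _ = m.choose t * 2 ^ t := by simp
  rw [mem_powersetCard] at hs
  rw [filter_support_eq_piFinset hs.2, Fintype.card_piFinset]
  simp [apply_ite, prod_ite_mem, hs.2]

theorem sum_piFinset_prod_exp_mul_pow (hf : f ∈ constantWeightTernary m t) (s x : ℝ) :
    ∑ g ∈ Fintype.piFinset fun _ => ({-1, 0, 1} : Finset ℤ),
        ∏ i, Real.exp (s * (f i * g i)) * x ^ (g i).natAbs =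
      (1 + 2 * x * Real.cosh s) ^ t * (1 + 2 * x) ^ (m - t) := by
  have hcoord : ∀ i, ∑ c ∈ ({-1, 0, 1} : Finset ℤ), Real.exp (s * (f i * c)) * x ^ c.natAbs =
      if f i = 0 then 1 + 2 * x else 1 + 2 * x * Real.cosh s := by
    intro i
    rw [Real.cosh_eq]
    rcases (mem_constantWeightTernary.1 hf).1 i with h | h | h <;> simp [h] <;> ring
  have hzero : #{i | f i = 0} = m - t := by
    have := card_filter_add_card_filter_not (s := univ) fun i => f i = 0
    rw [card_univ, Fintype.card_fin, (mem_constantWeightTernary.1 hf).2] at this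
    omega
  rw [← prod_univ_sum (fun _ => ({-1, 0, 1} : Finset ℤ))
      fun i c => Real.exp (s * (f i * c)) * x ^ c.natAbs, Fintype.prod_congr _ _ hcoord, prod_ite,
    prod_const, prod_const, hzero, (mem_constantWeightTernary.1 hf).2, mul_comm]

theorem card_filter_le_dotProduct_mul_exp_le (hf : f ∈ constantWeightTernary m t) {s x : ℝ}
    (hs : 0 ≤ s) (hx : 0 ≤ x) (r : ℝ) :
    #{g ∈ constantWeightTernary m t | r ≤ ((f ⬝ᵥ g : ℤ) : ℝ)} * (x ^ t * Real.exp (s * r)) ≤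
      (1 + 2 * x * Real.cosh s) ^ t * (1 + 2 * x) ^ (m - t) := by
  set w : (Fin m → ℤ) → ℝ := fun g => ∏ i, Real.exp (s * (f i * g i)) * x ^ (g i).natAbs
  have hweight : ∀ g ∈ constantWeightTernary m t, w g = Real.exp (s * (f ⬝ᵥ g : ℤ)) * x ^ t := by
    intro g hg
    simp only [w, prod_mul_distrib, ← Real.exp_sum, prod_pow_eq_pow_sum, sum_natAbs hg,
      dotProduct, ← mul_sum, Int.cast_sum, Int.cast_mul]
  rw [← sum_piFinset_prod_exp_mul_pow hf, ← nsmul_eq_mul]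
  calc _ ≤ ∑ g ∈ constantWeightTernary m t with r ≤ ((f ⬝ᵥ g : ℤ) : ℝ), w g := by
        refine card_nsmul_le_sum _ _ _ fun g hg => ?_
        rw [mem_filter] at hg
        rw [hweight g hg.1, mul_comm]
        gcongr
        exact hg.2
    _ ≤ ∑ g ∈ Fintype.piFinset fun _ => ({-1, 0, 1} : Finset ℤ), w g := by
        refine sum_le_sum_of_subset_of_nonneg
          ((filter_subset _ _).trans (filter_subset _ _)) fun g _ _ => ?_
        positivity

/-- With `x = 1/14` each zero coordinate contributes exactly `7 (1 + 2x) = 8` to `7^(m-t) B`, so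
only the support has to beat `8`; `s = log 16` makes its factor `481/64`. -/
theorem card_filter_half_le_dotProduct_le (hf : f ∈ constantWeightTernary m t) :
    (#{g ∈ constantWeightTernary m t | (t : ℝ) / 2 ≤ ((f ⬝ᵥ g : ℤ) : ℝ)} : ℝ) ≤
      (481 / 64) ^ t * (8 / 7) ^ (m - t) := by
  have h := card_filter_le_dotProduct_mul_exp_le hf (s := Real.log 16) (x := 1 / 14)
    (Real.log_nonneg (by norm_num)) (by norm_num) (t / 2)
  have hexp : Real.exp (Real.log 16 * (t / 2)) = 4 ^ t := by
    have : Real.log 16 * (t / 2) = t * Real.log 4 := by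
      rw [show (16 : ℝ) = 4 ^ 2 by norm_num, Real.log_pow]; push_cast; ring
    rw [this, Real.exp_nat_mul, Real.exp_log (by norm_num)]
  have hcosh : Real.cosh (Real.log 16) = 257 / 32 := by
    rw [Real.cosh_eq, Real.exp_neg, Real.exp_log (by norm_num)]
    norm_num
  rw [hexp, hcosh, ← mul_pow, ← le_div_iff₀ (by positivity)] at h
  refine h.trans_eq ?_
  rw [mul_div_right_comm, ← div_pow]
  norm_num

end constantWeightTernary

noncomputable def toSphere {m : ℕ} (t : ℕ) (f : Fin m → ℤ) : EuclideanSpace ℝ (Fin m) :=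
  WithLp.toLp 2 fun i => f i / √t

section ToSphere

variable {m t : ℕ} {f g : Fin m → ℤ}

@[simp]
theorem toSphere_apply (i : Fin m) : toSphere t f i = f i / √t := rfl

theorem toSphere_injective (ht : t ≠ 0) : Function.Injective (toSphere (m := m) t) := by
  intro f g hfg
  funext i
  have := congrArg (· i) hfg
  simp only [toSphere_apply] at this
  exact_mod_cast (div_left_inj' (by positivity)).1 this

theorem inner_toSphere (f g : Fin m → ℤ) :
    inner ℝ (toSphere t f) (toSphere t g) = (f ⬝ᵥ g : ℤ) / t := by
  rw [toSphere, toSphere, EuclideanSpace.inner_toLp_toLp, dotProduct, dotProduct, Int.cast_sum,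
    sum_div]
  refine sum_congr rfl fun i _ => ?_
  rw [star_trivial, div_mul_div_comm, ← sq, Real.sq_sqrt (Nat.cast_nonneg _)]
  push_cast
  ring

theorem norm_toSphere (hf : f ∈ constantWeightTernary m t) (ht : t ≠ 0) :
    ‖toSphere t f‖ = 1 := by
  have : ‖toSphere t f‖ ^ 2 = 1 := by
    rw [← real_inner_self_eq_norm_sq, inner_toSphere, constantWeightTernary.dotProduct_self hf]
    simp [ht]
  exact (pow_eq_one_iff_of_nonneg (norm_nonneg _) two_ne_zero).1 this

theorem one_lt_norm_toSphere_sub (hf : f ∈ constantWeightTernary m t)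
    (hg : g ∈ constantWeightTernary m t) (ht : t ≠ 0) (hfg : ((f ⬝ᵥ g : ℤ) : ℝ) < t / 2) :
    1 < ‖toSphere t f - toSphere t g‖ := by
  have htpos : (0 : ℝ) < t := by positivity
  have : 1 < ‖toSphere t f - toSphere t g‖ ^ 2 := by
    rw [norm_sub_sq_real, norm_toSphere hf ht, norm_toSphere hg ht, inner_toSphere]
    have : ((f ⬝ᵥ g : ℤ) : ℝ) / t < 1 / 2 := by rwa [div_lt_iff₀ htpos, one_div_mul_eq_div]
    linarith
  exact (one_lt_sq_iff₀ (norm_nonneg _)).1 this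

theorem toSphere_apply_mem (hf : f ∈ constantWeightTernary m t) (i : Fin m) :
    toSphere t f i = 0 ∨ toSphere t f i = 1 / √t ∨ toSphere t f i = -(1 / √t) := by
  rcases (mem_constantWeightTernary.1 hf).1 i with h | h | h <;> simp [h, neg_div]

theorem card_support_toSphere (hf : f ∈ constantWeightTernary m t) (ht : t ≠ 0) :
    #{i | toSphere t f i ≠ 0} = t := by
  simpa [ht] using (mem_constantWeightTernary.1 hf).2

end ToSphere

def binomialTerm (m j : ℕ) : ℕ := m.choose j * 2 ^ j * 7 ^ (m - j)

theorem binomialTerm_succ_mul (m j : ℕ) :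
    binomialTerm m (j + 1) * (7 * (j + 1)) = binomialTerm m j * (2 * (m - j)) := by
  rcases lt_or_ge j m with hj | hj
  · obtain ⟨k, rfl⟩ := Nat.exists_eq_add_of_lt hj
    calc binomialTerm (j + k + 1) (j + 1) * (7 * (j + 1))
        = ((j + k + 1).choose (j + 1) * (j + 1)) * 2 ^ (j + 1) * 7 ^ (k + 1) := by
          rw [binomialTerm, show j + k + 1 - (j + 1) = k by omega]; ring
      _ = binomialTerm (j + k + 1) j * (2 * (j + k + 1 - j)) := by
          rw [Nat.choose_succ_right_eq, binomialTerm, show j + k + 1 - j = k + 1 by omega]; ring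
  · simp [binomialTerm, Nat.choose_eq_zero_of_lt (Nat.lt_succ_of_le hj), Nat.sub_eq_zero_of_le hj]

theorem binomialTerm_monotoneOn (m : ℕ) :
    MonotoneOn (binomialTerm m) (Set.Iic (2 * m / 9)) := by
  refine monotoneOn_of_le_add_one Set.ordConnected_Iic fun j _ _ hj => ?_
  have h : 7 * (j + 1) ≤ 2 * (m - j) := by simp only [Set.mem_Iic] at hj; omega
  refine Nat.le_of_mul_le_mul_right ?_ (by omega : 0 < 7 * (j + 1))
  calc binomialTerm m j * (7 * (j + 1)) ≤ binomialTerm m j * (2 * (m - j)) := by gcongr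
    _ = binomialTerm m (j + 1) * (7 * (j + 1)) := (binomialTerm_succ_mul m j).symm

theorem binomialTerm_antitoneOn (m : ℕ) :
    AntitoneOn (binomialTerm m) (Set.Ici (2 * m / 9 + 1)) := by
  refine antitoneOn_of_add_one_le Set.ordConnected_Ici fun j _ hj _ => ?_
  have h : 2 * (m - j) ≤ 7 * (j + 1) := by simp only [Set.mem_Ici] at hj; omega
  refine Nat.le_of_mul_le_mul_right ?_ (by omega : 0 < 7 * (j + 1))
  calc binomialTerm m (j + 1) * (7 * (j + 1)) = binomialTerm m j * (2 * (m - j)) :=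
        binomialTerm_succ_mul m j
    _ ≤ binomialTerm m j * (7 * (j + 1)) := by gcongr

theorem binomialTerm_le_two_mul (m j : ℕ) :
    binomialTerm m j ≤ 2 * binomialTerm m (2 * m / 9) := by
  have hnext : binomialTerm m (2 * m / 9 + 1) ≤ 2 * binomialTerm m (2 * m / 9) := by
    refine Nat.le_of_mul_le_mul_right ?_ (by omega : 0 < 7 * (2 * m / 9 + 1))
    calc binomialTerm m (2 * m / 9 + 1) * (7 * (2 * m / 9 + 1))
        = binomialTerm m (2 * m / 9) * (2 * (m - 2 * m / 9)) := binomialTerm_succ_mul m _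
      _ ≤ binomialTerm m (2 * m / 9) * (2 * (7 * (2 * m / 9 + 1))) := by gcongr; omega
      _ = 2 * binomialTerm m (2 * m / 9) * (7 * (2 * m / 9 + 1)) := by ring
  rcases le_or_gt j (2 * m / 9) with hj | hj
  · exact (binomialTerm_monotoneOn m (Set.mem_Iic.2 hj) (Set.mem_Iic.2 le_rfl) hj).trans
      (by omega)
  · exact (binomialTerm_antitoneOn m (Set.mem_Ici.2 le_rfl) (Set.mem_Ici.2 hj) hj).trans hnext

theorem nine_pow_le_two_mul_succ_mul_choose (m : ℕ) :
    9 ^ m ≤ 2 * (m + 1) * (m.choose (2 * m / 9) * 2 ^ (2 * m / 9) * 7 ^ (m - 2 * m / 9)) := by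
  calc 9 ^ m = ∑ j ∈ range (m + 1), binomialTerm m j := by
        rw [show 9 = 2 + 7 by rfl, add_pow]
        exact sum_congr rfl fun j _ => by rw [binomialTerm, Nat.cast_id]; ring
    _ ≤ ∑ _j ∈ range (m + 1), 2 * binomialTerm m (2 * m / 9) :=
        sum_le_sum fun j _ => binomialTerm_le_two_mul m j
    _ = _ := by rw [sum_const, card_range, binomialTerm, smul_eq_mul]; ring

theorem eventually_two_mul_succ_le_pow {c : ℝ} (hc : 1 < c) :
    ∀ᶠ m : ℕ in atTop, 2 * ((m : ℝ) + 1) ≤ c ^ (2 * m / 9) := by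
  have htend : Tendsto (fun m : ℕ => 2 * m / 9) atTop atTop :=
    tendsto_atTop_atTop.2 fun b => ⟨9 * b, fun m hm => by omega⟩
  filter_upwards [htend.eventually ((isLittleO_coe_const_pow_of_one_lt (R := ℝ) hc).bound
    (by norm_num : (0 : ℝ) < 1 / 20)), htend.eventually_ge_atTop 1] with m hbound hpos
  simp only [norm_natCast, norm_pow, Real.norm_eq_abs, abs_of_pos (zero_lt_one.trans hc)]
    at hbound
  have : 2 * (m + 1) ≤ 20 * (2 * m / 9) := by omega
  calc 2 * ((m : ℝ) + 1) ≤ 20 * (2 * m / 9 : ℕ) := by exact_mod_cast this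
    _ ≤ c ^ (2 * m / 9) := by linarith

theorem constantWeightTernary.exists_subset_pairwise_dotProduct_lt_half (m : ℕ)
    (hgrowth : 2 * ((m : ℝ) + 1) ≤ (512 / 481) ^ (2 * m / 9)) :
    ∃ S ⊆ constantWeightTernary m (2 * m / 9),
      (S : Set (Fin m → ℤ)).Pairwise (fun f g => ((f ⬝ᵥ g : ℤ) : ℝ) < (2 * m / 9 : ℕ) / 2) ∧
      (9 / 8 : ℝ) ^ m ≤ #S := by
  set t := 2 * m / 9
  obtain ⟨S, hSV, hS, hcard⟩ := (constantWeightTernary m t).exists_pairwise_not_rel_card_le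
    (R := fun f g => (t : ℝ) / 2 ≤ ((f ⬝ᵥ g : ℤ) : ℝ))
    (fun f g h => by rwa [dotProduct_comm])
    (fun f hf => by simp only [constantWeightTernary.dotProduct_self hf]; push_cast; linarith)
    (fun f hf => constantWeightTernary.card_filter_half_le_dotProduct_le hf)
  refine ⟨S, hSV, hS.mono' fun f g h => not_le.1 h, ?_⟩
  have hnine : (9 : ℝ) ^ m ≤ 2 * (m + 1) * #(constantWeightTernary m t) * 7 ^ (m - t) := by
    rw [constantWeightTernary.card_eq, mul_assoc]
    exact_mod_cast nine_pow_le_two_mul_succ_mul_choose m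
  have hscaled : (8 : ℝ) ^ m * (9 / 8) ^ m ≤ 8 ^ m * #S := by
    calc (8 : ℝ) ^ m * (9 / 8) ^ m = 9 ^ m := by rw [← mul_pow]; norm_num
      _ ≤ 2 * (m + 1) * (#S * ((481 / 64) ^ t * (8 / 7) ^ (m - t))) * 7 ^ (m - t) := by
          refine hnine.trans ?_
          gcongr
      _ = 2 * (m + 1) * (481 / 64) ^ t * #S * 8 ^ (m - t) := by
          rw [show (8 : ℝ) ^ (m - t) = (8 / 7) ^ (m - t) * 7 ^ (m - t) by
            rw [← mul_pow]; norm_num]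
          ring
      _ ≤ (512 / 481) ^ t * (481 / 64) ^ t * #S * 8 ^ (m - t) := by gcongr
      _ = 8 ^ m * #S := by
          rw [← mul_pow, ← pow_sub_mul_pow (8 : ℝ) (show t ≤ m by omega)]
          norm_num
          ring
  exact le_of_mul_le_mul_left hscaled (by positivity)

/-- Zong's sphere-packing construction: for every `ε > 0` and all large `m`, with
`m₀ = ⌊2m/9⌋`, there is a set `Y` of unit vectors in `ℝ^m` with coordinates in
`{−1/√m₀, 0, 1/√m₀}`, exactly `m₀` nonzero coordinates each, pairwise distances at
least `1`, and `|Y| ≥ (9/8)^{m(1−ε)}`. -/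
theorem sphere_packing_lower_bound :
    ∀ ε : ℝ, 0 < ε → ∃ M : ℕ, ∀ m : ℕ, M ≤ m →
      ∃ Y : Finset (EuclideanSpace ℝ (Fin m)),
        (∀ z ∈ Y,
          (∀ i, z i = 0 ∨ z i = 1 / Real.sqrt (2 * m / 9 : ℕ) ∨
            z i = -(1 / Real.sqrt (2 * m / 9 : ℕ))) ∧
          (Finset.univ.filter (fun i => z i ≠ 0)).card = (2 * m / 9 : ℕ) ∧
          ‖z‖ = 1) ∧
        (∀ z ∈ Y, ∀ z' ∈ Y, z ≠ z' → 1 ≤ ‖z - z'‖) ∧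
        ((9 / 8 : ℝ) ^ ((m : ℝ) * (1 - ε)) ≤ Y.card) := by
  intro ε hε
  obtain ⟨M, hM⟩ := eventually_atTop.1 <|
    (eventually_two_mul_succ_le_pow (by norm_num : (1 : ℝ) < 512 / 481)).and
      (eventually_ge_atTop 5)
  refine ⟨M, fun m hm => ?_⟩
  obtain ⟨hgrowth, hm5⟩ := hM m hm
  have ht : 2 * m / 9 ≠ 0 := by omega
  obtain ⟨S, hSV, hS, hcard⟩ := 
    constantWeightTernary.exists_subset_pairwise_dotProduct_lt_half m hgrowth
  refine ⟨S.image (toSphere (2 * m / 9)), ?_, ?_, ?_⟩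
  · simp only [mem_image]
    rintro _ ⟨f, hf, rfl⟩
    exact ⟨toSphere_apply_mem (hSV hf), card_support_toSphere (hSV hf) ht,
      norm_toSphere (hSV hf) ht⟩
  · simp only [mem_image]
    rintro _ ⟨f, hf, rfl⟩ _ ⟨g, hg, rfl⟩ hne
    exact (one_lt_norm_toSphere_sub (hSV hf) (hSV hg) ht (hS hf hg (ne_of_apply_ne _ hne))).le
  · rw [card_image_of_injective _ (toSphere_injective ht)]
    calc (9 / 8 : ℝ) ^ ((m : ℝ) * (1 - ε)) ≤ (9 / 8) ^ (m : ℝ) :=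
          Real.rpow_le_rpow_of_exponent_le (by norm_num)
            (mul_le_of_le_one_right m.cast_nonneg (by linarith))
      _ = (9 / 8) ^ m := Real.rpow_natCast _ m
      _ ≤ #S := hcard
end

section
/- Let k ≤ m ≤ N. Let A_k be a maximal collection of m-element subsets of {1,...,N} such that any two distinct members intersect in at most k−1 elements. Then |A_k| ≥ C(N,k) / C(m,k)², where C(·,·) is the binomial coefficient. -/
/-!
If `s` is an `m`-set, either `s ∈ A` or, by maximality, `s` meets some `t ∈ A` in at least `k`
points; either way `s` contains one of the `C(m,k)` `k`-subsets of some `t ∈ A`. A fixed `k`-set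
lies in at most `C(N-k,m-k)` sets of size `m`, so `C(N,m) ≤ |A| C(m,k) C(N-k,m-k)`, and the
identity `C(N,m) C(m,k) = C(N,k) C(N-k,m-k)` turns this into `C(N,k) ≤ |A| C(m,k)²`.
-/

open Finset

namespace Finset

variable {α : Type*} [DecidableEq α]

theorem exists_mem_le_card_inter_of_maximal {m k : ℕ} (hk : k ≤ m) {A : Finset (Finset α)}
    (hmax : ∀ s : Finset α, #s = m → s ∉ A → ∃ t ∈ A, k ≤ #(s ∩ t))
    (s : Finset α) (hs : #s = m) : ∃ t ∈ A, k ≤ #(s ∩ t) := by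
  by_cases hsA : s ∈ A
  · exact ⟨s, hsA, by rwa [inter_self, hs]⟩
  · exact hmax s hs hsA

variable [Fintype α]

theorem card_filter_superset_powersetCard_univ_le (m : ℕ) (K : Finset α) :
    #{s ∈ powersetCard m univ | K ⊆ s} ≤ (Fintype.card α - #K).choose (m - #K) := by
  calc #{s ∈ powersetCard m univ | K ⊆ s}
      ≤ #(powersetCard (m - #K) (univ \ K)) := by
        refine card_le_card_of_injOn (· \ K) (fun s hs => ?_) (fun s hs t ht hst => ?_)
        · simp only [coe_filter, mem_powersetCard_univ, Set.mem_ofPred_eq] at hs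
          simp [card_sdiff_of_subset hs.2, hs.1, sdiff_subset_sdiff]
        · simp only [coe_filter, mem_powersetCard_univ, Set.mem_ofPred_eq] at hs ht
          simpa [sdiff_union_of_subset hs.2, sdiff_union_of_subset ht.2] using
            congrArg (· ∪ K) hst
    _ = (Fintype.card α - #K).choose (m - #K) := by rw [card_powersetCard, card_univ_sdiff]

theorem card_filter_le_card_inter_le (m k : ℕ) (t : Finset α) :
    #{s ∈ powersetCard m univ | k ≤ #(s ∩ t)} ≤
      (#t).choose k * (Fintype.card α - k).choose (m - k) := by
  have hsub : {s ∈ powersetCard m (univ : Finset α) | k ≤ #(s ∩ t)} ⊆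
      (t.powersetCard k).biUnion fun K => {s ∈ powersetCard m univ | K ⊆ s} := by
    intro s hs
    rw [mem_filter] at hs
    obtain ⟨K, hKst, hK⟩ := exists_subset_card_eq hs.2
    exact mem_biUnion.2 ⟨K, mem_powersetCard.2 ⟨hKst.trans inter_subset_right, hK⟩,
      mem_filter.2 ⟨hs.1, hKst.trans inter_subset_left⟩⟩
  calc #{s ∈ powersetCard m univ | k ≤ #(s ∩ t)}
      ≤ ∑ K ∈ t.powersetCard k, #{s ∈ powersetCard m univ | K ⊆ s} :=
        (card_le_card hsub).trans card_biUnion_le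
    _ ≤ ∑ K ∈ t.powersetCard k, (Fintype.card α - k).choose (m - k) := by
        refine sum_le_sum fun K hK => ?_
        simpa [(mem_powersetCard.1 hK).2] using card_filter_superset_powersetCard_univ_le m K
    _ = (#t).choose k * (Fintype.card α - k).choose (m - k) := by
        rw [sum_const, card_powersetCard, smul_eq_mul]

theorem choose_card_le_card_mul_of_forall_exists_le_card_inter {m k : ℕ}
    (A : Finset (Finset α)) (hcard : ∀ t ∈ A, #t = m)
    (hcover : ∀ s : Finset α, #s = m → ∃ t ∈ A, k ≤ #(s ∩ t)) :
    (Fintype.card α).choose m ≤ #A * (m.choose k * (Fintype.card α - k).choose (m - k)) := by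
  have hsub : powersetCard m (univ : Finset α) ⊆
      A.biUnion fun t => {s ∈ powersetCard m univ | k ≤ #(s ∩ t)} := by
    intro s hs
    obtain ⟨t, ht, hst⟩ := hcover s (mem_powersetCard_univ.1 hs)
    exact mem_biUnion.2 ⟨t, ht, mem_filter.2 ⟨hs, hst⟩⟩
  calc (Fintype.card α).choose m = #(powersetCard m (univ : Finset α)) := by
        rw [card_powersetCard, card_univ]
    _ ≤ ∑ t ∈ A, #{s ∈ powersetCard m univ | k ≤ #(s ∩ t)} :=
        (card_le_card hsub).trans card_biUnion_le
    _ ≤ ∑ t ∈ A, m.choose k * (Fintype.card α - k).choose (m - k) := by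
        refine sum_le_sum fun t ht => ?_
        simpa [hcard t ht] using card_filter_le_card_inter_le m k t
    _ = #A * (m.choose k * (Fintype.card α - k).choose (m - k)) := by
        rw [sum_const, smul_eq_mul]

end Finset

theorem Nat.choose_le_mul_choose_sq_of_choose_le {n m k a : ℕ} (hk : k ≤ m) (hm : m ≤ n)
    (h : n.choose m ≤ a * (m.choose k * (n - k).choose (m - k))) :
    n.choose k ≤ a * m.choose k ^ 2 := by
  refine Nat.le_of_mul_le_mul_right ?_ (Nat.choose_pos (Nat.sub_le_sub_right hm k))
  calc n.choose k * (n - k).choose (m - k) = n.choose m * m.choose k := (Nat.choose_mul hk).symm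
    _ ≤ a * (m.choose k * (n - k).choose (m - k)) * m.choose k := Nat.mul_le_mul_right _ h
    _ = a * m.choose k ^ 2 * (n - k).choose (m - k) := by ring

theorem maximal_packing_card_lower_bound_general {N m k : ℕ} (hk : k ≤ m) (hm : m ≤ N)
    (A : Finset (Finset (Fin N)))
    (hcard : ∀ s ∈ A, s.card = m)
    (hmax : ∀ s : Finset (Fin N), s.card = m → s ∉ A →
      ∃ t ∈ A, k ≤ (s ∩ t).card) :
    (N.choose k : ℝ) / (m.choose k : ℝ) ^ 2 ≤ (A.card : ℝ) := by
  have hcount := choose_card_le_card_mul_of_forall_exists_le_card_inter (k := k) A hcard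
    (exists_mem_le_card_inter_of_maximal hk hmax)
  rw [Fintype.card_fin] at hcount
  have hpos : (0 : ℝ) < (m.choose k : ℝ) ^ 2 := by
    have := Nat.choose_pos hk
    positivity
  rw [div_le_iff₀ hpos]
  exact_mod_cast Nat.choose_le_mul_choose_sq_of_choose_le hk hm hcount

/-- Counting bound for a maximal family of `m`-sets with pairwise intersections of size
at most `k−1`: `|A_k| ≥ C(N,k)/C(m,k)²`. -/
theorem maximal_packing_card_lower_bound {N m k : ℕ} (hk : k ≤ m) (hm : m ≤ N)
    (A : Finset (Finset (Fin N)))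
    (hcard : ∀ s ∈ A, s.card = m)
    (hinter : ∀ s ∈ A, ∀ t ∈ A, s ≠ t → (s ∩ t).card < k)
    (hmax : ∀ s : Finset (Fin N), s.card = m → s ∉ A →
      ∃ t ∈ A, k ≤ (s ∩ t).card) :
    (N.choose k : ℝ) / (m.choose k : ℝ) ^ 2 ≤ (A.card : ℝ) :=
  maximal_packing_card_lower_bound_general hk hm A hcard hmax
end

section
/- Construction of separated sparse unit vectors on disjoint supports: Let π, π' be m-sets with |π ∩ π'| ≤ m₀/2, let r ∈ (0,1), and let y = √(1−r²) e_ν + (r/√m₀) Σ_{l∈π} ε_l e_l and y' = √(1−r²) e_ν + (r/√m₀) Σ_{l∈π'} ε'_l e_l, where ε_l, ε'_l ∈ {−1,+1} and exactly m₀ coordinates are used in each sum (with m₀ ≤ m and ν ∉ π ∪ π'). Then L(y, y') = 2(1 − |⟨y,y'⟩|) ≥ r². -/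
open Finset

/-! The overlap `S ∩ S'` is the only place where both perturbations are nonzero, so
`|⟨y, y'⟩| ≤ (1 - r²) + (r²/m₀)·|S ∩ S'| ≤ 1 - r²/2`. -/

section SparseVectors

variable {ι : Type*}

theorem abs_real_inner_le_sum [Fintype ι] {x y : EuclideanSpace ℝ ι} {f : ι → ℝ}
    (h : ∀ k, |x k * y k| ≤ f k) : |(inner ℝ x y : ℝ)| ≤ ∑ k, f k := by
  have hinner : (inner ℝ x y : ℝ) = ∑ k, x k * y k := by
    simp [PiLp.inner_apply, mul_comm]
  rw [hinner]
  exact (abs_sum_le_sum_abs _ _).trans (sum_le_sum fun k _ => h k)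

theorem abs_mul_sparse_le [DecidableEq ι] {ν k : ι} {S S' : Finset ι} {a c : ℝ} {ε ε' : ι → ℝ}
    (hε : ∀ l, |ε l| ≤ 1) (hε' : ∀ l, |ε' l| ≤ 1) :
    |(if k = ν then a else if k ∈ S then c * ε k else 0) *
        (if k = ν then a else if k ∈ S' then c * ε' k else 0)| ≤
      (if k = ν then a ^ 2 else 0) + (if k ∈ S ∩ S' then c ^ 2 else 0) := by
  have hc : 0 ≤ c ^ 2 := sq_nonneg c
  by_cases hkν : k = ν
  · simp only [hkν, if_true, ← sq, abs_sq]
    split_ifs <;> linarith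
  · simp only [hkν, if_false, zero_add, mem_inter]
    by_cases hkS : k ∈ S <;> by_cases hkS' : k ∈ S' <;>
      simp only [hkS, hkS', and_self, and_false, false_and, if_true, if_false,
        mul_zero, zero_mul, abs_zero, le_refl]
    calc |c * ε k * (c * ε' k)| = c ^ 2 * (|ε k| * |ε' k|) := by
          rw [abs_mul, abs_mul, abs_mul, ← sq_abs c]; ring
      _ ≤ c ^ 2 * (1 * 1) := by gcongr <;> simp_all
      _ = c ^ 2 := by ring

theorem abs_real_inner_sparse_le [Fintype ι] [DecidableEq ι] {ν : ι} {S S' : Finset ι} {a c : ℝ}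
    {ε ε' : ι → ℝ} (hε : ∀ l, |ε l| ≤ 1) (hε' : ∀ l, |ε' l| ≤ 1) {y y' : EuclideanSpace ℝ ι}
    (hy : ∀ k, y k = if k = ν then a else if k ∈ S then c * ε k else 0)
    (hy' : ∀ k, y' k = if k = ν then a else if k ∈ S' then c * ε' k else 0) :
    |(inner ℝ y y' : ℝ)| ≤ a ^ 2 + c ^ 2 * #(S ∩ S') := by
  refine (abs_real_inner_le_sum fun k =>
    hy k ▸ hy' k ▸ abs_mul_sparse_le hε hε').trans_eq ?_
  rw [sum_add_distrib, sum_ite_eq' univ ν, ← sum_filter, sum_const, if_pos (mem_univ ν),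
    nsmul_eq_mul, mul_comm, filter_mem_eq_inter, univ_inter]

end SparseVectors

theorem sq_div_sqrt_mul_card_le {m n : ℕ} (h : 2 * n ≤ m) (r : ℝ) :
    (r / Real.sqrt m) ^ 2 * n ≤ r ^ 2 / 2 := by
  rw [div_pow, Real.sq_sqrt (Nat.cast_nonneg m)]
  rcases m.eq_zero_or_pos with rfl | hm
  · simp [div_nonneg (sq_nonneg r)]
  have hnm : 2 * (n : ℝ) ≤ m := by exact_mod_cast h
  rw [div_mul_eq_mul_div, div_le_div_iff₀ (by positivity) two_pos]
  nlinarith [sq_nonneg r]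

theorem separated_sparse_vectors_loss_general {Nn m₀ : ℕ}
    {r : ℝ} (hr0 : 0 < r) (hr1 : r < 1)
    (ν : Fin Nn) (S S' : Finset (Fin Nn))
    (hover : 2 * (S ∩ S').card ≤ m₀)
    (ε ε' : Fin Nn → ℝ)
    (hε : ∀ l, ε l = 1 ∨ ε l = -1) (hε' : ∀ l, ε' l = 1 ∨ ε' l = -1)
    (y y' : EuclideanSpace ℝ (Fin Nn))
    (hy : ∀ k, y k = if k = ν then Real.sqrt (1 - r ^ 2)
      else if k ∈ S then r / Real.sqrt m₀ * ε k else 0)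
    (hy' : ∀ k, y' k = if k = ν then Real.sqrt (1 - r ^ 2)
      else if k ∈ S' then r / Real.sqrt m₀ * ε' k else 0) :
    r ^ 2 ≤ 2 * (1 - |(inner ℝ y y' : ℝ)|) := by
  have habs : ∀ {δ : Fin Nn → ℝ}, (∀ l, δ l = 1 ∨ δ l = -1) → ∀ l, |δ l| ≤ 1 := fun h l => by
    rcases h l with h | h <;> simp [h]
  have hinner := abs_real_inner_sparse_le (habs hε) (habs hε') hy hy'
  have hcenter : Real.sqrt (1 - r ^ 2) ^ 2 = 1 - r ^ 2 := Real.sq_sqrt (by nlinarith)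
  have hoverlap := sq_div_sqrt_mul_card_le hover r
  linarith

/-- Separation of sparse hypothesis vectors on weakly overlapping supports: if the two
supports of size `m₀` overlap in at most `m₀/2` coordinates, then the sign-invariant
loss `L(y,y') = 2(1 − |⟨y,y'⟩|)` of the corresponding perturbed unit vectors is at
least `r²`. -/
theorem separated_sparse_vectors_loss {Nn m₀ : ℕ} (hm₀ : 0 < m₀)
    {r : ℝ} (hr0 : 0 < r) (hr1 : r < 1)
    (ν : Fin Nn) (S S' : Finset (Fin Nn))
    (hS : S.card = m₀) (hS' : S'.card = m₀)
    (hover : 2 * (S ∩ S').card ≤ m₀)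
    (hν : ν ∉ S ∪ S')
    (ε ε' : Fin Nn → ℝ)
    (hε : ∀ l, ε l = 1 ∨ ε l = -1) (hε' : ∀ l, ε' l = 1 ∨ ε' l = -1)
    (y y' : EuclideanSpace ℝ (Fin Nn))
    (hy : ∀ k, y k = if k = ν then Real.sqrt (1 - r ^ 2)
      else if k ∈ S then r / Real.sqrt m₀ * ε k else 0)
    (hy' : ∀ k, y' k = if k = ν then Real.sqrt (1 - r ^ 2)
      else if k ∈ S' then r / Real.sqrt m₀ * ε' k else 0) :
    r ^ 2 ≤ 2 * (1 - |(inner ℝ y y' : ℝ)|) :=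
  separated_sparse_vectors_loss_general hr0 hr1 ν S S' hover ε ε' hε hε' y y' hy hy'
end
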